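/- arXiv:2408.00398 — 2 statements merged into one kernel-verified Lean document; each statement's English description precedes it below -/
import Mathlib

section
/- Let G = (V,E) be a finite connected simple graph with edge-weight function w : E → ℝ, and let T ⊆ E be a spanning tree of G. Then T is a minimum spanning tree of G if and only if for every non-tree edge e = {u,v} ∈ E \ T and every edge f lying on the unique path between u and v in the tree (V,T), one has w(f) ≤ w(e). -/
/-- `T` is a spanning tree of `G`: a set of edges of `G` whose graph is a tree on all of `V`. -/
def isSpanningTree {V : Type*} (G : SimpleGraph V) (T : Set (Sym2 V)) : Prop :=
  T ⊆ G.edgeSet ∧ (SimpleGraph.fromEdgeSet T).IsTree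

/-- `T` is a minimum spanning tree of `G` with respect to the weight function `w`. -/
def isMST {V : Type*} (G : SimpleGraph V) (w : Sym2 V → ℝ) (T : Finset (Sym2 V)) : Prop :=
  isSpanningTree G ↑T ∧
    ∀ T' : Finset (Sym2 V), isSpanningTree G ↑T' → ∑ e ∈ T, w e ≤ ∑ e ∈ T', w e

/-!
Both directions rest on the exchange property of spanning trees: deleting an edge `e` of a tree
leaves two components, and adding any edge joining them gives a tree again. If `T` is minimum and
`f` lies on the tree path between the ends of a non-tree edge `e`, then `T - f + e` is a spanning
tree, so `w f ≤ w e`. Conversely, for a spanning tree `T'` and `e = uv ∈ T' \ T`, the `T`-path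
from `u` to `v` crosses the cut of `T' - e` along some `f ∈ T`; then `T' - e + f` is a spanning
tree no heavier than `T'` and sharing one more edge with `T`, and induction on `|T' \ T|` gives
`w T ≤ w T'`.
-/

open SimpleGraph Finset

namespace SimpleGraph

variable {V : Type*} {H K : SimpleGraph V}

lemma Walk.exists_dart_not_reachable {u v : V} (p : H.Walk u v) (h : ¬ K.Reachable u v) :
    ∃ d ∈ p.darts, ¬ K.Reachable d.fst d.snd := by
  obtain ⟨d, hd, hu, hv⟩ := p.exists_boundary_dart {z | K.Reachable u z} .rfl h
  exact ⟨d, hd, fun hr => hv (hu.trans hr)⟩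

lemma Connected.reachable_deleteEdges_or (hH : H.Connected) (x y z : V) :
    (H.deleteEdges {s(x, y)}).Reachable x z ∨ (H.deleteEdges {s(x, y)}).Reachable y z := by
  set K := H.deleteEdges {s(x, y)}
  by_contra hz
  obtain ⟨p⟩ := hH.preconnected x z
  obtain ⟨⟨⟨a, b⟩, hab⟩, -, ha, hb⟩ :=
    p.exists_boundary_dart {w | K.Reachable x w ∨ K.Reachable y w} (Or.inl .rfl) hz
  by_cases he : s(a, b) = s(x, y)
  · rcases Sym2.eq_iff.1 he with ⟨-, rfl⟩ | ⟨-, rfl⟩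
    exacts [hb (Or.inr .rfl), hb (Or.inl .rfl)]
  · have hK : K.Adj a b := deleteEdges_adj.2 ⟨hab, he⟩
    exact hb (ha.imp (·.trans hK.reachable) (·.trans hK.reachable))

theorem IsTree.deleteEdges_sup_edge (hH : H.IsTree) {x y a b : V}
    (hab : ¬ (H.deleteEdges {s(x, y)}).Reachable a b) :
    (H.deleteEdges {s(x, y)} ⊔ edge a b).IsTree := by
  set K := H.deleteEdges {s(x, y)}
  refine ⟨?_, (hH.isAcyclic.anti (deleteEdges_le _)).sup_edge_of_not_reachable hab⟩
  have hK : K ≤ K ⊔ edge a b := le_sup_left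
  have hab' : (K ⊔ edge a b).Reachable a b :=
    Adj.reachable <| (sup_adj _ _ _ _).2 <| Or.inr <|
      (edge_adj _ _ _ _).2 ⟨Or.inl ⟨rfl, rfl⟩, fun h => hab (h ▸ .rfl)⟩
  have hxy : (K ⊔ edge a b).Reachable x y := by
    rcases hH.connected.reachable_deleteEdges_or x y a with ha | ha <;>
      rcases hH.connected.reachable_deleteEdges_or x y b with hb | hb
    · exact absurd (ha.symm.trans hb) hab
    · exact (ha.mono hK).trans (hab'.trans (hb.mono hK).symm)
    · exact (hb.mono hK).trans (hab'.symm.trans (ha.mono hK).symm)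
    · exact absurd (ha.symm.trans hb) hab
  have := hH.connected.nonempty
  refine (connected_iff_exists_forall_reachable _).2 ⟨x, fun z => ?_⟩
  rcases hH.connected.reachable_deleteEdges_or x y z with hz | hz
  exacts [hz.mono hK, hxy.trans (hz.mono hK)]

lemma IsAcyclic.not_reachable_deleteEdges_of_mem_edges (hH : H.IsAcyclic) {u v : V}
    (p : H.Path u v) {e : Sym2 V} (he : e ∈ p.1.edges) : ¬ (H.deleteEdges {e}).Reachable u v := by
  classical
  induction e with | h x y => ?_
  intro hr
  obtain ⟨q, hq⟩ := reachable_deleteEdges_iff_exists_walk.1 hr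
  rw [(hH.subsingleton_path u v).elim p q.toPath] at he
  exact hq (q.edges_toPath_subset_edges he)

lemma edgeSet_fromEdgeSet_of_subset {G : SimpleGraph V} {S : Set (Sym2 V)} (hS : S ⊆ G.edgeSet) :
    (fromEdgeSet S).edgeSet = S := by
  rw [edgeSet_fromEdgeSet, sdiff_eq_left, ← Set.subset_compl_iff_disjoint_right]
  exact hS.trans G.edgeSet_subset_compl_diagSet

end SimpleGraph

lemma Finset.sum_insert_erase {α β : Type*} [DecidableEq α] [AddCommGroup β] {s : Finset α}
    {a b : α} (ha : a ∈ s) (hb : b ∉ s) (f : α → β) :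
    ∑ x ∈ insert b (s.erase a), f x = ∑ x ∈ s, f x - f a + f b := by
  rw [sum_insert (fun h => hb (mem_of_mem_erase h)), sum_erase_eq_sub ha, add_comm]

section SpanningTree

variable {V : Type*} {G : SimpleGraph V}

lemma isSpanningTree.mem_of_mem_edges {T : Set (Sym2 V)} (hT : isSpanningTree G T) {u v : V}
    (p : (fromEdgeSet T).Walk u v) {f : Sym2 V} (hf : f ∈ p.edges) : f ∈ T :=
  edgeSet_fromEdgeSet_of_subset hT.1 ▸ p.edges_subset_edgeSet hf

lemma isSpanningTree.eq_of_subset {T T' : Set (Sym2 V)} (hT : isSpanningTree G T)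
    (hT' : isSpanningTree G T') (hsub : T' ⊆ T) : T' = T := by
  have hgraph : fromEdgeSet T' = fromEdgeSet T :=
    (isTree_iff_minimal_connected.1 hT.2).eq_of_le hT'.2.connected (fromEdgeSet_mono hsub)
  rw [← edgeSet_fromEdgeSet_of_subset hT'.1, hgraph, edgeSet_fromEdgeSet_of_subset hT.1]

lemma isSpanningTree.insert_erase [DecidableEq V] {T : Finset (Sym2 V)}
    (hT : isSpanningTree G T) {e : Sym2 V} {a b : V} (hab : s(a, b) ∈ G.edgeSet)
    (hsep : ¬ ((fromEdgeSet (T : Set (Sym2 V))).deleteEdges {e}).Reachable a b) :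
    isSpanningTree G ↑(insert s(a, b) (T.erase e)) := by
  induction e with | h x y => ?_
  refine ⟨?_, ?_⟩
  · rw [coe_insert, coe_erase]
    exact Set.insert_subset hab (Set.sdiff_subset.trans hT.1)
  · convert hT.2.deleteEdges_sup_edge hsep using 1
    rw [coe_insert, coe_erase, Set.insert_eq, fromEdgeSet_union, fromEdgeSet_sdiff, sup_comm]
    rfl

end SpanningTree

section MST

variable {V : Type*} {G : SimpleGraph V} {w : Sym2 V → ℝ} {T : Finset (Sym2 V)}

def IsPathOptimal (G : SimpleGraph V) (w : Sym2 V → ℝ) (T : Finset (Sym2 V)) : Prop :=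
  ∀ u v : V, s(u, v) ∈ G.edgeSet → s(u, v) ∉ T →
    ∀ p : (fromEdgeSet (T : Set (Sym2 V))).Path u v, ∀ f ∈ p.1.edges, w f ≤ w s(u, v)

theorem isMST.isPathOptimal (hMST : isMST G w T) : IsPathOptimal G w T := by
  classical
  intro u v huv huvT p f hf
  have hfT : f ∈ T := hMST.1.mem_of_mem_edges p.1 hf
  have hsep := hMST.1.2.isAcyclic.not_reachable_deleteEdges_of_mem_edges p hf
  have hle := hMST.2 _ (hMST.1.insert_erase huv hsep)
  rw [sum_insert_erase hfT huvT] at hle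
  linarith

theorem IsPathOptimal.exists_exchange [DecidableEq V] (hopt : IsPathOptimal G w T)
    (hT : isSpanningTree G T) {T' : Finset (Sym2 V)} (hT' : isSpanningTree G T') {e : Sym2 V}
    (he : e ∈ T' \ T) :
    ∃ T'' : Finset (Sym2 V), isSpanningTree G T'' ∧ ∑ x ∈ T'', w x ≤ ∑ x ∈ T', w x ∧
      #(T'' \ T) < #(T' \ T) := by
  induction e with | h u v => ?_
  obtain ⟨heT', heT⟩ := mem_sdiff.1 he
  set K := (fromEdgeSet (T' : Set (Sym2 V))).deleteEdges {s(u, v)}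
  have huv : ¬ K.Reachable u v := isBridge_iff.1 <| isAcyclic_iff_forall_isBridge.1
    hT'.2.isAcyclic <| by rw [edgeSet_fromEdgeSet_of_subset hT'.1]; exact heT'
  obtain ⟨q⟩ := hT.2.connected.preconnected u v
  obtain ⟨⟨⟨a, b⟩, _⟩, hd, hab : ¬ K.Reachable a b⟩ := q.toPath.1.exists_dart_not_reachable huv
  have hf : s(a, b) ∈ q.toPath.1.edges := by
    rw [Walk.edges_eq_map_darts]
    exact List.mem_map_of_mem hd
  have hfT : s(a, b) ∈ T := hT.mem_of_mem_edges _ hf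
  have hfT' : s(a, b) ∉ T' := by
    refine fun hfT' => hab (Adj.reachable (deleteEdges_adj.2 ⟨?_, ?_⟩))
    · exact (fromEdgeSet_adj _).2 ⟨hfT', fun h => hab (h ▸ .rfl)⟩
    · exact fun h => heT ((Set.mem_singleton_iff.1 h) ▸ hfT)
  refine ⟨_, hT'.insert_erase (hT.1 hfT) hab, ?_, ?_⟩
  · rw [sum_insert_erase heT' hfT']
    linarith [hopt u v (hT'.1 heT') heT q.toPath s(a, b) hf]
  · rw [insert_sdiff_of_mem _ hfT, erase_sdiff_comm]
    exact card_erase_lt_of_mem he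

theorem IsPathOptimal.isMST (hopt : IsPathOptimal G w T) (hT : isSpanningTree G T) :
    isMST G w T := by
  classical
  refine ⟨hT, fun T' hT' => ?_⟩
  induction hn : #(T' \ T) using Nat.strong_induction_on generalizing T' with | _ n ih => ?_
  obtain hempty | ⟨e, he⟩ := (T' \ T).eq_empty_or_nonempty
  · have hsub : (T' : Set (Sym2 V)) ⊆ T := coe_subset.2 (sdiff_eq_empty_iff_subset.1 hempty)
    rw [coe_inj.1 (hT.eq_of_subset hT' hsub)]
  · obtain ⟨T'', hT'', hle, hlt⟩ := hopt.exists_exchange hT hT' he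
    exact (ih _ (hn ▸ hlt) T'' hT'' rfl).trans hle

end MST

theorem mst_iff_cut_condition_general {V : Type*}
    (G : SimpleGraph V) (w : Sym2 V → ℝ)
    (T : Finset (Sym2 V)) (hST : isSpanningTree G ↑T) :
    isMST G w T ↔
      ∀ u v : V, s(u, v) ∈ G.edgeSet → s(u, v) ∉ T →
        ∀ p : (SimpleGraph.fromEdgeSet (↑T : Set (Sym2 V))).Path u v,
          ∀ f ∈ p.1.edges, w f ≤ w s(u, v) :=
  ⟨isMST.isPathOptimal, fun hopt => IsPathOptimal.isMST hopt hST⟩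

/-- A spanning tree `T` of a finite connected graph `G` is a minimum spanning tree iff for
every non-tree edge `{u,v}` and every edge `f` on the unique path between `u` and `v`
in the tree, `w f ≤ w {u,v}`. -/
theorem mst_iff_cut_condition {V : Type*} [Fintype V] [DecidableEq V]
    (G : SimpleGraph V) (hG : G.Connected) (w : Sym2 V → ℝ)
    (T : Finset (Sym2 V)) (hST : isSpanningTree G ↑T) :
    isMST G w T ↔
      ∀ u v : V, s(u, v) ∈ G.edgeSet → s(u, v) ∉ T →
        ∀ p : (SimpleGraph.fromEdgeSet (↑T : Set (Sym2 V))).Path u v,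
          ∀ f ∈ p.1.edges, w f ≤ w s(u, v) :=
  mst_iff_cut_condition_general G w T hST
end

section
/- Let T be a finite tree on vertex set V rooted at r, and let C be a partition of V into clusters (each inducing a connected subgraph of T). The cluster-graph T_C is a tree; root it at the cluster containing r, and for a vertex v let c(v) denote the cluster of C containing v. Then for all vertices u, v ∈ V, the cluster containing the lowest common ancestor of u and v in T equals the lowest common ancestor of c(u) and c(v) in the rooted cluster-tree T_C; that is, c(LCA_T(u,v)) = LCA_{T_C}(c(u), c(v)). -/
/-- In a tree rooted at `r`, `u` is an ancestor of `v` if `u` lies on the (unique) path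
from `v` to `r`. -/
def isAncestor {V : Type*} (T : SimpleGraph V) (r u v : V) : Prop :=
  ∀ p : T.Path v r, u ∈ p.1.support

/-- `ℓ` is the lowest common ancestor of `u` and `v` in the tree `T` rooted at `r`. -/
def isLCA {V : Type*} (T : SimpleGraph V) (r ℓ u v : V) : Prop :=
  (isAncestor T r ℓ u ∧ isAncestor T r ℓ v) ∧
    ∀ a : V, isAncestor T r a u → isAncestor T r a v → isAncestor T r a ℓ

/-- The cluster-graph of a graph `T` with respect to a family `C` of vertex sets:
two distinct clusters are adjacent iff some edge of `T` joins a vertex of one to a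
vertex of the other. -/
def clusterGraph {V : Type*} (T : SimpleGraph V) (C : Set (Set V)) : SimpleGraph C :=
  SimpleGraph.fromRel (fun c₁ c₂ => ∃ u ∈ (c₁ : Set V), ∃ v ∈ (c₂ : Set V), T.Adj u v)

/-!
A cluster `a` is an ancestor of `cx` in the cluster tree exactly when it contains an ancestor of
`x` in `T`, because walks can be moved back and forth between `T` and its cluster graph. It then
remains to show that a connected set `A` containing ancestors `x` of `u` and `y` of `v` contains an
ancestor of `ℓ = LCA(u, v)`. Otherwise `x` and `y` lie strictly below `ℓ`, and a walk through `A`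
joins the children of `ℓ` towards `u` and towards `v` while avoiding `ℓ`. In a tree these children
coincide, giving a common ancestor of `u` and `v` strictly below `ℓ`.
-/

open SimpleGraph

section Tree

variable {V : Type*} {T : SimpleGraph V}

lemma isAncestor_self (r v : V) : isAncestor T r v v := fun p => p.1.start_mem_support

lemma isAncestor_iff_forall_walk {r a v : V} :
    isAncestor T r a v ↔ ∀ w : T.Walk v r, a ∈ w.support := by
  classical
  exact ⟨fun h w => w.support_bypass_subset_support (h ⟨w.bypass, w.bypass_isPath⟩),
    fun h p => h p.1⟩

lemma SimpleGraph.IsAcyclic.isAncestor_iff_mem_support (hT : T.IsAcyclic) {r a v : V}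
    {p : T.Walk v r} (hp : p.IsPath) : isAncestor T r a v ↔ a ∈ p.support :=
  ⟨fun h => h ⟨p, hp⟩, fun h q => by rwa [(hT.subsingleton_path v r).elim q ⟨p, hp⟩]⟩

lemma SimpleGraph.IsAcyclic.eq_of_adj_of_walk_avoiding (hT : T.IsAcyclic) {c c' ℓ : V}
    (hc : T.Adj c ℓ) (hc' : T.Adj c' ℓ) (w : T.Walk c c') (hℓ : ℓ ∉ w.support) : c = c' := by
  classical
  have h := hT.mem_support_of_ne_mem_support_of_adj_of_isPath (Path.singleton hc).2
    w.bypass_isPath hc'.symm fun h => hℓ (w.support_bypass_subset_support h)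
  simpa [Path.singleton, hc'.ne, eq_comm] using h

lemma exists_walk_support_subset {A : Set V} (hA : (T.induce A).Connected) {x y : V}
    (hx : x ∈ A) (hy : y ∈ A) : ∃ w : T.Walk x y, ∀ z ∈ w.support, z ∈ A := by
  obtain ⟨w⟩ := hA ⟨x, hx⟩ ⟨y, hy⟩
  refine ⟨w.map (Embedding.induce A).toHom, fun z hz => ?_⟩
  obtain ⟨⟨z, hzA⟩, -, rfl⟩ := List.mem_map.1 (w.support_map _ ▸ hz)
  exact hzA

lemma exists_adj_isAncestor_of_not_isAncestor (hT : T.IsTree) {r ℓ w x : V}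
    (hℓ : isAncestor T r ℓ w) (hx : isAncestor T r x w) (hxℓ : ¬ isAncestor T r x ℓ) :
    ∃ c, T.Adj c ℓ ∧ isAncestor T r c w ∧ ¬ isAncestor T r c ℓ ∧
      ∃ q : T.Walk x c, ℓ ∉ q.support := by
  classical
  obtain ⟨P, hP, -⟩ := hT.existsUnique_path w r
  have hℓP : ℓ ∈ P.support := hℓ ⟨P, hP⟩
  set below := P.takeUntil ℓ hℓP
  have hsplit : (below.append (P.dropUntil ℓ hℓP)).IsPath := by rwa [P.take_spec hℓP]
  have hxbelow : x ∈ below.support := by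
    have hxP : x ∈ P.support := hx ⟨P, hP⟩
    rw [← P.take_spec hℓP, Walk.mem_support_append_iff] at hxP
    exact hxP.resolve_right fun h =>
      hxℓ ((hT.isAcyclic.isAncestor_iff_mem_support (hP.dropUntil hℓP)).2 h)
  have hxℓ' : x ≠ ℓ := by
    rintro rfl
    exact hxℓ (isAncestor_self r x)
  obtain ⟨c, hadj, q, hq⟩ := (below.dropUntil x hxbelow).reverse.exists_eq_cons_of_ne hxℓ'.symm
  have hqpath : (Walk.cons hadj q).IsPath := hq ▸ ((hP.takeUntil hℓP).dropUntil hxbelow).reverse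
  have hcbelow : c ∈ below.support := by
    have hc : c ∈ (below.dropUntil x hxbelow).reverse.support := by simp [hq]
    exact below.support_dropUntil_subset_support hxbelow (by simpa using hc)
  refine ⟨c, hadj.symm, ?_, fun hc => ?_, q.reverse, ?_⟩
  · exact (hT.isAcyclic.isAncestor_iff_mem_support hP).2
      (P.support_takeUntil_subset_support hℓP hcbelow)
  · exact hsplit.ne_of_mem_support_of_append hadj.ne' hcbelow (hc ⟨_, hP.dropUntil hℓP⟩) rfl
  · simpa using ((Walk.cons_isPath_iff _ _).1 hqpath).2

lemma exists_mem_isAncestor_of_isLCA (hT : T.IsTree) {r ℓ u v : V} (hℓ : isLCA T r ℓ u v)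
    {A : Set V} (hA : (T.induce A).Connected)
    (hu : ∃ x ∈ A, isAncestor T r x u) (hv : ∃ y ∈ A, isAncestor T r y v) :
    ∃ z ∈ A, isAncestor T r z ℓ := by
  obtain ⟨x, hxA, hxu⟩ := hu
  obtain ⟨y, hyA, hyv⟩ := hv
  by_contra! hbelow
  have hℓA : ℓ ∉ A := fun h => hbelow ℓ h (isAncestor_self r ℓ)
  obtain ⟨c, hc, hcu, hcℓ, p, hp⟩ :=
    exists_adj_isAncestor_of_not_isAncestor hT hℓ.1.1 hxu (hbelow x hxA)
  obtain ⟨c', hc', hc'v, -, p', hp'⟩ :=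
    exists_adj_isAncestor_of_not_isAncestor hT hℓ.1.2 hyv (hbelow y hyA)
  obtain ⟨q, hqA⟩ := exists_walk_support_subset hA hxA hyA
  have hℓq : ℓ ∉ q.support := fun h => hℓA (hqA ℓ h)
  obtain rfl : c = c' := hT.isAcyclic.eq_of_adj_of_walk_avoiding hc hc'
    (p.reverse.append (q.append p')) (by simp [hp, hp', hℓq])
  exact hcℓ (hℓ.2 c hcu hc'v)

end Tree

section Cluster

variable {V : Type*} {T : SimpleGraph V} {C : Set (Set V)}

lemma Setoid.IsPartition.subtype_eq_of_mem (hpart : Setoid.IsPartition C) {c d : C} {z : V}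
    (hc : z ∈ (c : Set V)) (hd : z ∈ (d : Set V)) : c = d :=
  Subtype.ext (Setoid.eq_of_mem_eqv_class hpart.2 c.2 hc d.2 hd)

lemma clusterGraph_adj {c d : C} :
    (clusterGraph T C).Adj c d ↔ c ≠ d ∧ ∃ x ∈ (c : Set V), ∃ y ∈ (d : Set V), T.Adj x y := by
  refine (fromRel_adj _ _ _).trans (and_congr_right fun _ => or_iff_left_of_imp ?_)
  rintro ⟨y, hy, x, hx, hyx⟩
  exact ⟨x, hx, y, hy, hyx.symm⟩

lemma exists_clusterGraph_walk (hpart : Setoid.IsPartition C) {x y : V} (w : T.Walk x y)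
    {c d : C} (hx : x ∈ (c : Set V)) (hy : y ∈ (d : Set V)) :
    ∃ W : (clusterGraph T C).Walk c d, ∀ e ∈ W.support, ∃ z ∈ w.support, z ∈ (e : Set V) := by
  induction w generalizing c with
  | @nil x =>
    obtain rfl := hpart.subtype_eq_of_mem hx hy
    exact ⟨Walk.nil, fun e he => ⟨x, by simp, by simp_all⟩⟩
  | @cons x x' y hxx' w ih =>
    obtain ⟨b, ⟨hbC, hx'b⟩, -⟩ := hpart.2 x'
    obtain ⟨W, hW⟩ := ih (c := ⟨b, hbC⟩) hx'b hy
    have hW' : ∀ e ∈ W.support, ∃ z ∈ (Walk.cons hxx' w).support, z ∈ (e : Set V) := by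
      intro e he
      obtain ⟨z, hz, hze⟩ := hW e he
      exact ⟨z, by simp [hz], hze⟩
    by_cases hcb : c = ⟨b, hbC⟩
    · subst hcb
      exact ⟨W, hW'⟩
    · have hadj : (clusterGraph T C).Adj c ⟨b, hbC⟩ :=
        clusterGraph_adj.2 ⟨hcb, x, hx, x', hx'b, hxx'⟩
      refine ⟨Walk.cons hadj W, fun e he => ?_⟩
      rcases List.mem_cons.1 he with rfl | he
      · exact ⟨x, by simp, hx⟩
      · exact hW' e he

lemma exists_walk_of_clusterGraph_walk (hconn : ∀ c ∈ C, (T.induce c).Connected)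
    {c d : C} (W : (clusterGraph T C).Walk c d) {x y : V} (hx : x ∈ (c : Set V))
    (hy : y ∈ (d : Set V)) :
    ∃ w : T.Walk x y, ∀ z ∈ w.support, ∃ e ∈ W.support, z ∈ (e : Set V) := by
  induction W generalizing x with
  | @nil c =>
    obtain ⟨w, hw⟩ := exists_walk_support_subset (hconn c c.2) hx hy
    exact ⟨w, fun z hz => ⟨c, by simp, hw z hz⟩⟩
  | @cons c c' d hadj W ih =>
    obtain ⟨-, p, hp, p', hp', hpp'⟩ := clusterGraph_adj.1 hadj
    obtain ⟨w₁, hw₁⟩ := exists_walk_support_subset (hconn c c.2) hx hp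
    obtain ⟨w₂, hw₂⟩ := ih hp' hy
    refine ⟨w₁.append (Walk.cons hpp' w₂), fun z hz => ?_⟩
    rcases (Walk.mem_support_append_iff _ _).1 hz with hz | hz
    · exact ⟨c, by simp, hw₁ z hz⟩
    rcases List.mem_cons.1 hz with rfl | hz
    · exact ⟨c, by simp, hp⟩
    · obtain ⟨e, he, hze⟩ := hw₂ z hz
      exact ⟨e, by simp [he], hze⟩

lemma isAncestor_clusterGraph_iff (hT : T.IsTree) (hpart : Setoid.IsPartition C)
    (hconn : ∀ c ∈ C, (T.induce c).Connected) {r x : V} {cr cx a : C}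
    (hr : r ∈ (cr : Set V)) (hx : x ∈ (cx : Set V)) :
    isAncestor (clusterGraph T C) cr a cx ↔ ∃ z ∈ (a : Set V), isAncestor T r z x := by
  constructor
  · intro ha
    obtain ⟨P, hP, -⟩ := hT.existsUnique_path x r
    obtain ⟨W, hW⟩ := exists_clusterGraph_walk hpart P hx hr
    obtain ⟨z, hzP, hza⟩ := hW a (isAncestor_iff_forall_walk.1 ha W)
    exact ⟨z, hza, (hT.isAcyclic.isAncestor_iff_mem_support hP).2 hzP⟩
  · rintro ⟨z, hza, hzx⟩
    refine isAncestor_iff_forall_walk.2 fun W => ?_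
    obtain ⟨w, hw⟩ := exists_walk_of_clusterGraph_walk hconn W hx hr
    obtain ⟨e, heW, hze⟩ := hw z (isAncestor_iff_forall_walk.1 hzx w)
    rwa [hpart.subtype_eq_of_mem hze hza] at heW

end Cluster

theorem cluster_of_lca_is_lca_of_clusters_general {V : Type*}
    (T : SimpleGraph V) (hT : T.IsTree) (r : V)
    (C : Set (Set V)) (hpart : Setoid.IsPartition C)
    (hconn : ∀ c ∈ C, (T.induce c).Connected)
    (u v ℓ : V) (hℓ : isLCA T r ℓ u v)
    (cu cv cl cr : C) (hu : u ∈ (cu : Set V)) (hv : v ∈ (cv : Set V))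
    (hl : ℓ ∈ (cl : Set V)) (hr : r ∈ (cr : Set V)) :
    isLCA (clusterGraph T C) cr cl cu cv := by
  have hanc := fun {x : V} {cx : C} (hx : x ∈ (cx : Set V)) (a : C) =>
    isAncestor_clusterGraph_iff (a := a) hT hpart hconn hr hx
  refine ⟨⟨(hanc hu cl).2 ⟨ℓ, hl, hℓ.1.1⟩, (hanc hv cl).2 ⟨ℓ, hl, hℓ.1.2⟩⟩, fun a hau hav => ?_⟩
  exact (hanc hl a).2 <| exists_mem_isAncestor_of_isLCA hT hℓ (hconn a a.2)
    ((hanc hu a).1 hau) ((hanc hv a).1 hav)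

/-- For a finite tree `T` rooted at `r` and a partition `C` of its vertices into
clusters, the cluster containing `LCA_T(u,v)` is the LCA in the cluster-tree `T_C`
(rooted at the cluster containing `r`) of the clusters containing `u` and `v`. -/
theorem cluster_of_lca_is_lca_of_clusters {V : Type*} [Fintype V]
    (T : SimpleGraph V) (hT : T.IsTree) (r : V)
    (C : Set (Set V)) (hpart : Setoid.IsPartition C)
    (hconn : ∀ c ∈ C, (T.induce c).Connected)
    (u v ℓ : V) (hℓ : isLCA T r ℓ u v)
    (cu cv cl cr : C) (hu : u ∈ (cu : Set V)) (hv : v ∈ (cv : Set V))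
    (hl : ℓ ∈ (cl : Set V)) (hr : r ∈ (cr : Set V)) :
    isLCA (clusterGraph T C) cr cl cu cv :=
  cluster_of_lca_is_lca_of_clusters_general T hT r C hpart hconn u v ℓ hℓ cu cv cl cr hu hv hl hr
end
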